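/- Fix an integer N ≥ 2 and a probability vector p on Fin r with r > 2, p i > 0 for all i, and p 0 ≥ p i for all i (so p 0 is the largest subset proportion). For an integer c ≥ 2, let R(p,c) = 1 - (N/(2·(N-1))) · VI₂(p, u_c) denote the Rand index between the ground truth and a statistically independent balanced candidate partition with c clusters, where u_c is the uniform probability vector on Fin c. Suppose p 0 > 1/2. Then: (1) if p 0 · (p 0 - 1/2) > ∑_{i ≠ 0} p i · (1/2 - p i), then R(p,·) is strictly decreasing in c; (2) if p 0 · (p 0 - 1/2) = ∑_{i ≠ 0} p i · (1/2 - p i), then R(p,·) is constant in c; (3) if p 0 · (p 0 - 1/2) < ∑_{i ≠ 0} p i · (1/2 - p i), then R(p,·) is strictly increasing in c. -/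
import Mathlib


/-- The quadratic entropy of a finitely supported probability vector. -/
noncomputable def quadEntropy {α : Type*} [Fintype α] (x : α → ℝ) : ℝ :=
  2 * (1 - ∑ i, (x i) ^ 2)

/-- The quadratic variation of information between (the distributions of)
two statistically independent partitions. -/
noncomputable def VI2 {α β : Type*} [Fintype α] [Fintype β] (p : α → ℝ) (q : β → ℝ) : ℝ :=
  2 * quadEntropy (fun ij : α × β => p ij.1 * q ij.2) - quadEntropy p - quadEntropy q

/-- The uniform (balanced) probability vector on `Fin c`. -/
noncomputable def unif (c : ℕ) : Fin c → ℝ := fun _ => 1 / (c : ℝ)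

/-- The (expected) Rand index between a ground-truth distribution `p` and a
statistically independent balanced candidate partition with `c` clusters. -/
noncomputable def randGT (N : ℕ) {r : ℕ} (p : Fin r → ℝ) (c : ℕ) : ℝ :=
  1 - ((N : ℝ) / (2 * ((N : ℝ) - 1))) * VI2 p (unif c)

lemma randGT_formula (N : ℕ) {r : ℕ} (p : Fin r → ℝ) {c : ℕ} (hc : 0 < c) :
    randGT N p c = 1 - ((N:ℝ)/(2*((N:ℝ)-1))) *
      (2*(∑ i, (p i)^2) + (2 - 4*(∑ i, (p i)^2))/c) := by
  have hc0 : (c:ℝ) ≠ 0 := by positivity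
  have hV : VI2 p (unif c) = 2*(∑ i, (p i)^2) + (2 - 4*(∑ i, (p i)^2))/c := by
    simp only [VI2, quadEntropy, unif, Fintype.sum_prod_type, mul_pow,
      Finset.sum_const, Finset.card_univ, Fintype.card_fin, nsmul_eq_mul,
      ← Finset.mul_sum, ← Finset.sum_mul]
    field_simp
    ring
  rw [randGT, hV]

theorem randGT_bias_of_dominant_cluster {N r : ℕ} [NeZero r] (hN : 2 ≤ N) (hr : 2 < r)
    (p : Fin r → ℝ) (hp : ∀ i, 0 < p i) (hp1 : ∑ i, p i = 1)
    (hmax : ∀ i, p i ≤ p 0) (h0 : (1 : ℝ) / 2 < p 0) :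
    (∑ i ∈ Finset.univ.erase 0, p i * (1 / 2 - p i) < p 0 * (p 0 - 1 / 2) →
      ∀ c c' : ℕ, 2 ≤ c → c < c' → randGT N p c' < randGT N p c) ∧
    (p 0 * (p 0 - 1 / 2) = ∑ i ∈ Finset.univ.erase 0, p i * (1 / 2 - p i) →
      ∀ c c' : ℕ, 2 ≤ c → 2 ≤ c' → randGT N p c = randGT N p c') ∧
    (p 0 * (p 0 - 1 / 2) < ∑ i ∈ Finset.univ.erase 0, p i * (1 / 2 - p i) →
      ∀ c c' : ℕ, 2 ≤ c → c < c' → randGT N p c < randGT N p c') := by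
  set S : ℝ := ∑ i, (p i)^2 with hSdef
  set K : ℝ := (N:ℝ)/(2*((N:ℝ)-1)) with hKdef
  have hN2 : (2:ℝ) ≤ (N:ℝ) := by exact_mod_cast hN
  have hKpos : 0 < K := by
    apply div_pos <;> nlinarith
  have hsum : ∑ i ∈ Finset.univ.erase 0, p i * (1 / 2 - p i)
      = 1/2 - S - p 0 * (1/2 - p 0) := by
    have h1 : ∑ i, p i * (1 / 2 - p i) = 1/2 - S := by
      have : ∑ i, p i * (1 / 2 - p i) = (∑ i, p i)/2 - S := by
        rw [hSdef, Finset.sum_div, ← Finset.sum_sub_distrib]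
        exact Finset.sum_congr rfl (fun i _ => by ring)
      rw [this, hp1]
    have h2 := Finset.sum_erase_add Finset.univ (fun i => p i * (1 / 2 - p i))
      (Finset.mem_univ (0 : Fin r))
    linarith [h2.symm ▸ h1]
  refine ⟨?_, ?_, ?_⟩
  · intro h c c' hc hcc'
    have hSgt : 1/2 < S := by rw [hsum] at h; nlinarith
    have hc0 : 0 < c := by omega
    have hc'0 : 0 < c' := by omega
    rw [randGT_formula N p hc0, randGT_formula N p hc'0, ← hKdef, ← hSdef]
    have hinv : (1:ℝ)/(c':ℝ) < 1/(c:ℝ) := by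
      apply one_div_lt_one_div_of_lt
      · exact_mod_cast hc0
      · exact_mod_cast hcc'
    have hneg : K * (2 - 4*S) < 0 := by nlinarith
    have h3 := mul_lt_mul_of_neg_left hinv hneg
    rw [mul_one_div, mul_one_div, mul_div_assoc, mul_div_assoc] at h3
    linarith
  · intro h c c' hc hc'
    have hSeq : S = 1/2 := by rw [hsum] at h; nlinarith
    have hc0 : 0 < c := by omega
    have hc'0 : 0 < c' := by omega
    rw [randGT_formula N p hc0, randGT_formula N p hc'0, ← hSdef, hSeq]
    norm_num
  · intro h c c' hc hcc'
    have hSlt : S < 1/2 := by rw [hsum] at h; nlinarith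
    have hc0 : 0 < c := by omega
    have hc'0 : 0 < c' := by omega
    rw [randGT_formula N p hc0, randGT_formula N p hc'0, ← hKdef, ← hSdef]
    have hinv : (1:ℝ)/(c':ℝ) < 1/(c:ℝ) := by
      apply one_div_lt_one_div_of_lt
      · exact_mod_cast hc0
      · exact_mod_cast hcc'
    have hpos : 0 < K * (2 - 4*S) := by nlinarith
    have h3 := mul_lt_mul_of_pos_left hinv hpos
    rw [mul_one_div, mul_one_div, mul_div_assoc, mul_div_assoc] at h3
    linarith
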